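/- With the notation of the associated Euler totient function: if F is a polynomial Euler product of degree d with |α_j(p)| ≤ 1, then the Dirichlet series ∑_{n≥1} φ(n,F)/n^s converges absolutely for Re(s) > 2, and in that half-plane ∑_{n≥1} φ(n,F)/n^s = ζ(s-1) · ∑_{n≥1} α(n)/n^s. -/

import Mathlib

/-!
Expanding `∏_{p ∣ n} (1 - γ(p)/p)` over the subsets of the prime divisors of `n` turns it into a
sum over the squarefree divisors of `n`, so `φ(·,F)` is the Dirichlet convolution of `n ↦ n` with
`α`. Since `|γ(p)| ≤ d e^d` uniformly in `p`, `|α(n)| = O(n)`; hence both L-series converge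
absolutely for `Re s > 2`, where the L-series of the convolution is the product of the two, and
the L-series of `n ↦ n` is `ζ(s - 1)`.
-/

open ArithmeticFunction Finset

open scoped LSeries.notation

theorem Real.exp_sub_one_le_mul_exp (x : ℝ) : Real.exp x - 1 ≤ x * Real.exp x := by
  have h := mul_le_mul_of_nonneg_right (Real.one_sub_le_exp_neg x) (Real.exp_pos x).le
  rw [← Real.exp_add, neg_add_cancel, Real.exp_zero] at h
  linarith

theorem Finset.norm_one_sub_prod_one_sub_le {ι R : Type*} [NormedCommRing R] [NormOneClass R]
    (t : Finset ι) (f : ι → R) :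
    ‖1 - ∏ i ∈ t, (1 - f i)‖ ≤ (∑ i ∈ t, ‖f i‖) * Real.exp (∑ i ∈ t, ‖f i‖) := by
  have h := t.norm_prod_one_add_sub_one_le (fun i => -f i)
  simp only [← sub_eq_add_neg, norm_neg] at h
  rw [norm_sub_rev]
  exact h.trans (Real.exp_sub_one_le_mul_exp _)

theorem norm_natCast_mul_one_sub_prod_one_sub_div_le {ι : Type*} (t : Finset ι) {z : ι → ℂ}
    (hz : ∀ i ∈ t, ‖z i‖ ≤ 1) {n : ℕ} (hn : n ≠ 0) :
    ‖(n : ℂ) * (1 - ∏ i ∈ t, (1 - z i / n))‖ ≤ #t * Real.exp #t := by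
  have hn₀ : (0 : ℝ) < n := by exact_mod_cast Nat.pos_of_ne_zero hn
  have hsum : ∑ i ∈ t, ‖z i / n‖ ≤ #t / n := by
    simp only [norm_div, Complex.norm_natCast, ← sum_div]
    gcongr
    simpa using sum_le_sum hz
  calc ‖(n : ℂ) * (1 - ∏ i ∈ t, (1 - z i / n))‖
      ≤ n * ((#t / n) * Real.exp (#t / n)) := by
        rw [norm_mul, Complex.norm_natCast]
        gcongr
        exact (t.norm_one_sub_prod_one_sub_le _).trans (by gcongr)
    _ ≤ #t * Real.exp #t := by
        rw [← mul_assoc, mul_div_cancel₀ _ hn₀.ne']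
        gcongr
        exact div_le_self (Nat.cast_nonneg _) (by exact_mod_cast Nat.one_le_iff_ne_zero.mpr hn)

theorem Nat.exists_prod_primeFactors_le_const_mul {f : ℕ → ℝ} {B : ℝ} (hf₀ : ∀ p, 0 ≤ f p)
    (hf : ∀ p, p.Prime → f p ≤ B) : ∃ C, ∀ n : ℕ, n ≠ 0 → ∏ p ∈ n.primeFactors, f p ≤ C * n := by
  classical
  set B' := max B 1
  set M := ⌈B'⌉₊
  refine ⟨B' ^ (M + 1), fun n hn => ?_⟩
  have hfB' : ∀ p ∈ n.primeFactors, f p ≤ B' :=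
    fun p hp => (hf p (Nat.prime_of_mem_primeFactors hp)).trans (le_max_left _ _)
  -- primes `p ≤ M` contribute at most `B'` each, larger ones at most `p` since `B' ≤ M < p`
  have hsmall : ∏ p ∈ n.primeFactors with p ≤ M, f p ≤ B' ^ (M + 1) :=
    calc ∏ p ∈ n.primeFactors with p ≤ M, f p
        ≤ B' ^ #{p ∈ n.primeFactors | p ≤ M} :=
          (prod_le_prod (fun p _ => hf₀ p) fun p hp => hfB' p (mem_filter.mp hp).1).trans_eq
            (prod_const _)
      _ ≤ B' ^ (M + 1) := by
          refine pow_le_pow_right₀ (le_max_right _ _) ?_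
          simpa using
            card_le_card fun p hp => mem_range.mpr (Nat.lt_succ_of_le (mem_filter.mp hp).2)
  have hlarge : ∏ p ∈ n.primeFactors with ¬p ≤ M, f p ≤ n :=
    calc ∏ p ∈ n.primeFactors with ¬p ≤ M, f p
        ≤ ∏ p ∈ n.primeFactors with ¬p ≤ M, (p : ℝ) := by
          refine prod_le_prod (fun p _ => hf₀ p) fun p hp => ?_
          obtain ⟨hp, hpM⟩ := mem_filter.mp hp
          exact (hfB' p hp).trans ((Nat.le_ceil B').trans (by exact_mod_cast (not_le.mp hpM).le))
      _ ≤ n := by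
          rw [← Nat.cast_prod]
          exact_mod_cast Nat.le_of_dvd (Nat.pos_of_ne_zero hn)
            ((prod_dvd_prod_of_subset _ _ _ (filter_subset _ _)).trans
              (Nat.prod_primeFactors_dvd n))
  rw [← prod_filter_mul_prod_filter_not n.primeFactors (· ≤ M)]
  exact mul_le_mul hsmall hlarge (prod_nonneg fun p _ => hf₀ p) (by positivity)

theorem moebius_prod_primes {t : Finset ℕ} (ht : ∀ p ∈ t, p.Prime) :
    moebius (∏ p ∈ t, p) = (-1) ^ #t := by
  rw [isMultiplicative_moebius.map_prod_of_prime t ht,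
    prod_congr rfl fun p hp => moebius_apply_prime (ht p hp), prod_const]

theorem natCast_convolution_moebius_mul_prod_primeFactors {K : Type*} [Field K] [CharZero K]
    (g : ℕ → K) :
    ((fun n : ℕ => (n : K)) ⍟ fun n => (moebius n : K) * ∏ p ∈ n.primeFactors, g p) =
      fun n : ℕ => n * ∏ p ∈ n.primeFactors, (1 - g p / p) := by
  ext n
  rcases eq_or_ne n 0 with rfl | hn
  · simp
  simp only [LSeries.convolution_def]
  rw [Nat.sum_divisorsAntidiagonal'
      (f := fun k d => (k : K) * (moebius d * ∏ p ∈ d.primeFactors, g p)),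
    ← sum_filter_of_ne (p := Squarefree) fun d _ hd => ?nonsq,
    Nat.sum_divisors_filter_squarefree hn, Nat.factors_eq, List.toFinset_coe, Nat.toFinset_factors]
  case nonsq =>
    contrapose! hd
    rw [moebius_eq_zero_of_not_squarefree hd]
    simp
  simp_rw [sub_eq_add_neg, prod_one_add, mul_sum]
  refine sum_congr rfl fun t ht => ?_
  have htn := mem_powerset.mp ht
  have ht_prime : ∀ p ∈ t, p.Prime := fun p hp => Nat.prime_of_mem_primeFactors (htn hp)
  have hdvd : ∏ p ∈ t, p ∣ n :=
    (prod_dvd_prod_of_subset _ _ _ htn).trans (Nat.prod_primeFactors_dvd n)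
  have hprod : (∏ p ∈ t, (p : K)) ≠ 0 :=
    prod_ne_zero_iff.mpr fun p hp => Nat.cast_ne_zero.mpr (ht_prime p hp).ne_zero
  rw [t.prod_val, Function.id_def, Nat.cast_div hdvd (by rwa [Nat.cast_prod]),
    Nat.primeFactors_prod ht_prime, moebius_prod_primes ht_prime, prod_neg, prod_div_distrib]
  push_cast
  field_simp

theorem LSeriesSummable_of_le_const_mul_natCast {f : ℕ → ℂ} {s : ℂ} (hs : 2 < s.re) {C : ℝ}
    (hf : ∀ n ≠ 0, ‖f n‖ ≤ C * n) : LSeriesSummable f s :=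
  LSeriesSummable_of_le_const_mul_rpow hs ⟨C, fun n hn => by norm_num [hf n hn]⟩

theorem LSeries_natCast_eq_riemannZeta_sub_one {s : ℂ} (hs : 2 < s.re) :
    L (fun n : ℕ => (n : ℂ)) s = riemannZeta (s - 1) := by
  have hs₁ : 1 < (s - 1).re := by rw [Complex.sub_re, Complex.one_re]; linarith
  rw [zeta_eq_tsum_one_div_nat_cpow hs₁]
  refine tsum_congr fun n => ?_
  rcases eq_or_ne n 0 with rfl | hn
  · simp [Complex.zero_cpow (Complex.ne_zero_of_one_lt_re hs₁)]
  rw [LSeries.term_of_ne_zero hn, Complex.cpow_sub _ _ (Nat.cast_ne_zero.mpr hn), Complex.cpow_one,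
    one_div_div]

/-- The Dirichlet series `∑ φ(n,F)/n^s` converges absolutely for `Re(s) > 2`
and there equals `ζ(s-1) · ∑ α(n)/n^s`. -/
theorem assoc_totient_dirichlet_series
    (d : ℕ) (a : ℕ → Fin d → ℂ)
    (ha : ∀ p : ℕ, p.Prime → ∀ j : Fin d, ‖a p j‖ ≤ 1)
    (Fpinv : ℕ → ℂ) (hFpinv : ∀ p : ℕ, Fpinv p = ∏ j : Fin d, (1 - a p j / p))
    (γ : ℕ → ℂ) (hγ : ∀ p : ℕ, γ p = p * (1 - Fpinv p))
    (α : ℕ → ℂ) (hα : ∀ n : ℕ, α n = (moebius n : ℂ) * ∏ p ∈ n.primeFactors, γ p)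
    (φF : ℕ → ℂ) (hφF : ∀ n : ℕ, φF n = n * ∏ p ∈ n.primeFactors, Fpinv p) :
    ∀ s : ℂ, 2 < s.re →
      Summable (fun n : ℕ => ‖φF n / (n : ℂ) ^ s‖) ∧
      ∑' n : ℕ, φF n / (n : ℂ) ^ s
        = riemannZeta (s - 1) * ∑' n : ℕ, α n / (n : ℂ) ^ s := by
  intro s hs
  have hγ_le : ∀ p, p.Prime → ‖γ p‖ ≤ d * Real.exp d := fun p hp => by
    simpa [hγ, hFpinv] using
      norm_natCast_mul_one_sub_prod_one_sub_div_le univ (fun j _ => ha p hp j) hp.ne_zero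
  obtain ⟨C, hC⟩ := Nat.exists_prod_primeFactors_le_const_mul (fun p => norm_nonneg (γ p)) hγ_le
  have hα_le : ∀ n ≠ 0, ‖α n‖ ≤ C * n := fun n hn => by
    rw [hα, norm_mul, norm_prod, ← one_mul (C * n)]
    exact mul_le_mul (by exact_mod_cast abs_moebius_le_one) (hC n hn) (by positivity) zero_le_one
  have hφF_eq : φF = (fun n : ℕ => (n : ℂ)) ⍟ α := by
    rw [funext hα, natCast_convolution_moebius_mul_prod_primeFactors]
    ext n
    rw [hφF]
    refine congrArg _ (prod_congr rfl fun p hp => ?_)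
    have hp₀ : (p : ℂ) ≠ 0 := Nat.cast_ne_zero.mpr (Nat.prime_of_mem_primeFactors hp).ne_zero
    rw [hγ, mul_div_cancel_left₀ _ hp₀, sub_sub_cancel]
  have hsum_nat : LSeriesSummable (fun n : ℕ => (n : ℂ)) s :=
    LSeriesSummable_of_le_const_mul_natCast hs (C := 1) (by simp)
  have hsum_α : LSeriesSummable α s := LSeriesSummable_of_le_const_mul_natCast hs hα_le
  have hs₀ : s ≠ 0 := by rintro rfl; norm_num at hs
  simp only [← LSeries.term_of_ne_zero' hs₀]
  refine ⟨summable_norm_iff.mpr (hφF_eq ▸ hsum_nat.convolution hsum_α), ?_⟩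
  change L φF s = riemannZeta (s - 1) * L α s
  rw [hφF_eq, LSeries_convolution' hsum_nat hsum_α, LSeries_natCast_eq_riemannZeta_sub_one hs]
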